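/- arXiv:1109.6104 — 4 statements merged into one kernel-verified Lean document; each statement's English description precedes it below -/
import Mathlib

section
/- Let N ≥ 2 and η_α = exp(2πiα/N) for α = 1,…,N-1 (the nontrivial N-th roots of unity). For every integer m with 1 ≤ m ≤ N, one has ∑_{α=1}^{N-1} η_α^m/(η_α - 1) = (N+1)/2 - m. -/
open Finset Complex

noncomputable def η (N α : ℕ) : ℂ := Complex.exp (2 * Real.pi * Complex.I * α / N)

/-!
Write `z = ζ^α` for a primitive `N`-th root of unity `ζ`. For `z ≠ 1`,
`z^m / (z - 1) = (1 + z + ⋯ + z^(m-1)) + 1 / (z - 1)`. Summed over the nontrivial roots, the power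
sum `∑ z^j` is `N - 1` for `j = 0` and `-1` for `0 < j < N`, so the geometric part contributes
`N - m`. The remaining sum `S = ∑ 1 / (z - 1)` is computed by pairing `z` with `z⁻¹`:
`1 / (z - 1) + 1 / (z⁻¹ - 1) = -1`, hence `2 S = 1 - N`.
-/

section Field

variable {K : Type*} [Field K]

theorem geom_sum_eq_zero_of_pow_eq_one {w : K} {n : ℕ} (hw : w ≠ 1) (hwn : w ^ n = 1) :
    ∑ i ∈ range n, w ^ i = 0 := by
  rw [geom_sum_eq hw, hwn, sub_self, zero_div]

theorem pow_div_sub_one_eq_geom_sum_add {z : K} (hz : z ≠ 1) (m : ℕ) :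
    z ^ m / (z - 1) = ∑ i ∈ range m, z ^ i + (z - 1)⁻¹ := by
  rw [geom_sum_eq hz]
  ring

theorem inv_sub_one_add_inv_inv_sub_one {z : K} (hz0 : z ≠ 0) (hz1 : z ≠ 1) :
    (z - 1)⁻¹ + (z⁻¹ - 1)⁻¹ = -1 := by
  have hsub : z - 1 ≠ 0 := sub_ne_zero.mpr hz1
  have hsub' : z⁻¹ - 1 ≠ 0 := sub_ne_zero.mpr (inv_ne_one.mpr hz1)
  field_simp
  ring

end Field

namespace IsPrimitiveRoot

variable {K : Type*} [Field K] {ζ : K} {N : ℕ}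

theorem sum_Ico_pow_pow (hζ : IsPrimitiveRoot ζ N) {j : ℕ} (hj0 : j ≠ 0) (hjN : j < N) :
    ∑ α ∈ Ico 1 N, (ζ ^ α) ^ j = -1 := by
  have hgeom := geom_sum_eq_zero_of_pow_eq_one (hζ.pow_ne_one_of_pos_of_lt hj0 hjN)
    (by rw [pow_right_comm, hζ.pow_eq_one, one_pow])
  rw [sum_range_eq_add_Ico _ (by omega), pow_zero] at hgeom
  simp_rw [pow_right_comm ζ _ j]
  linear_combination hgeom

theorem sum_range_sum_Ico_pow_pow (hζ : IsPrimitiveRoot ζ N) {m : ℕ} (hm0 : m ≠ 0) (hmN : m ≤ N) :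
    ∑ j ∈ range m, ∑ α ∈ Ico 1 N, (ζ ^ α) ^ j = N - m := by
  obtain ⟨k, rfl⟩ := Nat.exists_eq_succ_of_ne_zero hm0
  rw [sum_range_succ', sum_congr rfl fun i hi => hζ.sum_Ico_pow_pow i.succ_ne_zero
    (by rw [mem_range] at hi; omega)]
  simp only [pow_zero, sum_const, Nat.card_Ico, nsmul_eq_mul, card_range, mul_one]
  rw [Nat.cast_sub (by omega)]
  push_cast
  ring

theorem two_mul_sum_Ico_inv_pow_sub_one (hζ : IsPrimitiveRoot ζ N) (hN : N ≠ 0) :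
    2 * ∑ α ∈ Ico 1 N, (ζ ^ α - 1)⁻¹ = 1 - N := by
  have hreflect : ∑ α ∈ Ico 1 N, (ζ ^ (N - α) - 1)⁻¹ = ∑ α ∈ Ico 1 N, (ζ ^ α - 1)⁻¹ := by
    rw [sum_Ico_reflect (fun α => (ζ ^ α - 1)⁻¹) 1 (Nat.le_succ N)]
    simp
  have hpair : ∀ α ∈ Ico 1 N, (ζ ^ α - 1)⁻¹ + (ζ ^ (N - α) - 1)⁻¹ = -1 := by
    intro α hα
    rw [mem_Ico] at hα
    have hinv : ζ ^ (N - α) = (ζ ^ α)⁻¹ :=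
      eq_inv_of_mul_eq_one_left (by rw [pow_sub_mul_pow ζ hα.2.le, hζ.pow_eq_one])
    rw [hinv]
    exact inv_sub_one_add_inv_inv_sub_one (pow_ne_zero _ (hζ.ne_zero hN))
      (hζ.pow_ne_one_of_pos_of_lt (by omega) hα.2)
  rw [two_mul]
  nth_rw 2 [← hreflect]
  rw [← sum_add_distrib, sum_congr rfl hpair, sum_const, Nat.card_Ico, nsmul_eq_mul,
    Nat.cast_sub (by omega)]
  push_cast
  ring

theorem two_mul_sum_Ico_pow_pow_div_pow_sub_one (hζ : IsPrimitiveRoot ζ N) {m : ℕ} (hm0 : m ≠ 0)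
    (hmN : m ≤ N) : 2 * ∑ α ∈ Ico 1 N, (ζ ^ α) ^ m / (ζ ^ α - 1) = N + 1 - 2 * m := by
  have hne : ∀ α ∈ Ico 1 N, ζ ^ α ≠ 1 := fun α hα =>
    hζ.pow_ne_one_of_pos_of_lt (by rw [mem_Ico] at hα; omega) (mem_Ico.mp hα).2
  rw [sum_congr rfl fun α hα => pow_div_sub_one_eq_geom_sum_add (hne α hα) m, sum_add_distrib,
    sum_comm, mul_add, hζ.two_mul_sum_Ico_inv_pow_sub_one (by omega),
    hζ.sum_range_sum_Ico_pow_pow hm0 hmN]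
  ring

end IsPrimitiveRoot

theorem stmt_5_general (N : ℕ) (m : ℤ) (hm1 : 1 ≤ m) (hm2 : m ≤ N) :
    ∑ α ∈ Finset.Icc 1 (N - 1), (η N α) ^ m / (η N α - 1) =
      ((N : ℂ) + 1) / 2 - (m : ℂ) := by
  lift m to ℕ using by omega
  have hζ := Complex.isPrimitiveRoot_exp N (by omega)
  have hη : ∀ α, η N α = exp (2 * Real.pi * I / N) ^ α := fun α => by
    rw [η, ← exp_nat_mul]
    ring_nf
  have hIcc : Icc 1 (N - 1) = Ico 1 N := by
    ext
    simp only [mem_Icc, mem_Ico]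
    omega
  have key := hζ.two_mul_sum_Ico_pow_pow_div_pow_sub_one (m := m) (by omega) (by omega)
  simp only [zpow_natCast, hη, hIcc, Int.cast_natCast]
  linear_combination key / 2

theorem stmt_5 (N : ℕ) (hN : 2 ≤ N) (m : ℤ) (hm1 : 1 ≤ m) (hm2 : m ≤ N) :
    ∑ α ∈ Finset.Icc 1 (N - 1), (η N α) ^ m / (η N α - 1) =
      ((N : ℂ) + 1) / 2 - (m : ℂ) :=
  stmt_5_general N m hm1 hm2
end

section
/- Let N ≥ 2 and η_α = exp(2πiα/N) for α = 1,…,N-1. For every integer m with 1 ≤ m ≤ N, one has ∑_{α=1}^{N-1} η_α^m/(η_α - 1)² = -(N²-1)/12 + (m-1)(N-m+1)/2. -/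
/-!
For `x` ranging over the nontrivial `N`-th roots of unity `ζ ^ α`, the sums
`S j k = ∑ x ^ j / (x - 1) ^ k` satisfy `S (j + 1) (k + 1) = S j (k + 1) + S j k`, because
`x ^ (j + 1) - x ^ j = x ^ j * (x - 1)`, and `S j 0 = -1` for `0 < j < N`. Hence `S j 1` and
`S j 2` are polynomials in `j` whose constant terms `S 1 1`, `S 1 2` are the only unknowns. They
are pinned down by `∑_{j=1}^N S j k = 0`, which holds since `∑_{j=1}^N x ^ j = 0` for each `x`.
-/

open Finset Complex

theorem Finset.sum_range_natCast_mul_two {R : Type*} [CommRing R] (n : ℕ) :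
    (∑ i ∈ range n, (i : R)) * 2 = n * (n - 1) := by
  induction n with
  | zero => simp
  | succ n ih => rw [sum_range_succ, add_mul, ih]; push_cast; ring

theorem Finset.sum_range_natCast_mul_sub_one_mul_three {R : Type*} [CommRing R] (n : ℕ) :
    (∑ i ∈ range n, (i : R) * (i - 1)) * 3 = n * (n - 1) * (n - 2) := by
  induction n with
  | zero => simp
  | succ n ih => rw [sum_range_succ, add_mul, ih]; push_cast; ring

theorem sum_range_pow_succ_eq_zero {K : Type*} [Field K] {x : K} {N : ℕ}
    (hxN : x ^ N = 1) (hx : x ≠ 1) : ∑ j ∈ range N, x ^ (j + 1) = 0 := by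
  simp_rw [pow_succ, ← sum_mul, geom_sum_eq hx, hxN, sub_self, zero_div, zero_mul]

theorem sum_Icc_one_pow_eq_neg_one {K : Type*} [Field K] {x : K} {N : ℕ} (hN : N ≠ 0)
    (hxN : x ^ N = 1) (hx : x ≠ 1) : ∑ α ∈ Icc 1 (N - 1), x ^ α = -1 := by
  have hrange : Icc 1 (N - 1) = (range N).erase 0 := by
    ext
    simp only [mem_Icc, mem_erase, mem_range]
    omega
  rw [hrange, sum_erase_eq_sub (by simpa using Nat.pos_of_ne_zero hN), geom_sum_eq hx, hxN]
  simp

section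

variable {K : Type*} [Field K]

def rootSum (ζ : K) (N j k : ℕ) : K :=
  ∑ α ∈ Icc 1 (N - 1), (ζ ^ α) ^ j / (ζ ^ α - 1) ^ k

variable {ζ : K} {N : ℕ}

theorem IsPrimitiveRoot.pow_ne_one_of_mem_Icc (hζ : IsPrimitiveRoot ζ N) {α : ℕ}
    (hα : α ∈ Icc 1 (N - 1)) : ζ ^ α ≠ 1 := by
  rw [mem_Icc] at hα
  exact hζ.pow_ne_one_of_pos_of_lt (by omega) (by omega)

theorem IsPrimitiveRoot.pow_pow_eq_one (hζ : IsPrimitiveRoot ζ N) (α : ℕ) : (ζ ^ α) ^ N = 1 := by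
  rw [← pow_mul, mul_comm, pow_mul, hζ.pow_eq_one, one_pow]

theorem rootSum_succ_succ (hζ : IsPrimitiveRoot ζ N) (j k : ℕ) :
    rootSum ζ N (j + 1) (k + 1) = rootSum ζ N j (k + 1) + rootSum ζ N j k := by
  rw [rootSum, rootSum, rootSum, ← sum_add_distrib]
  refine sum_congr rfl fun α hα => ?_
  have := sub_ne_zero.mpr (hζ.pow_ne_one_of_mem_Icc hα)
  field_simp
  ring

theorem rootSum_zero (hζ : IsPrimitiveRoot ζ N) {j : ℕ} (hj0 : j ≠ 0) (hjN : j < N) :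
    rootSum ζ N j 0 = -1 := by
  simp_rw [rootSum, pow_zero, div_one, ← pow_mul, mul_comm _ j, pow_mul]
  exact sum_Icc_one_pow_eq_neg_one (by omega) (hζ.pow_pow_eq_one j)
    (hζ.pow_ne_one_of_pos_of_lt hj0 hjN)

theorem sum_range_rootSum_succ (hζ : IsPrimitiveRoot ζ N) (k : ℕ) :
    ∑ j ∈ range N, rootSum ζ N (j + 1) k = 0 := by
  simp only [rootSum]
  rw [sum_comm]
  refine sum_eq_zero fun α hα => ?_
  rw [← sum_div, sum_range_pow_succ_eq_zero (hζ.pow_pow_eq_one α) (hζ.pow_ne_one_of_mem_Icc hα),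
    zero_div]

theorem rootSum_succ_one (hζ : IsPrimitiveRoot ζ N) {j : ℕ} (hj : j < N) :
    rootSum ζ N (j + 1) 1 = rootSum ζ N 1 1 - j := by
  induction j with
  | zero => simp
  | succ j ih =>
    rw [rootSum_succ_succ hζ, ih (by omega), rootSum_zero hζ (by omega) hj]
    push_cast; ring

theorem rootSum_succ_two (hζ : IsPrimitiveRoot ζ N) {j : ℕ} (hj : j < N) :
    2 * rootSum ζ N (j + 1) 2 = 2 * rootSum ζ N 1 2 + 2 * j * rootSum ζ N 1 1 - j * (j - 1) := by
  induction j with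
  | zero => simp
  | succ j ih =>
    rw [rootSum_succ_succ hζ, mul_add, ih (by omega), rootSum_succ_one (j := j) hζ (by omega)]
    push_cast; ring

section CharZero

variable [CharZero K]

theorem rootSum_one_one (hN : N ≠ 0) (hζ : IsPrimitiveRoot ζ N) :
    rootSum ζ N 1 1 = (N - 1) / 2 := by
  have hsum := sum_range_rootSum_succ hζ 1
  rw [sum_congr rfl fun j hj => rootSum_succ_one hζ (mem_range.mp hj), sum_sub_distrib,
    sum_const, card_range, nsmul_eq_mul] at hsum
  have := Finset.sum_range_natCast_mul_two (R := K) N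
  field_simp
  apply mul_left_cancel₀ (Nat.cast_ne_zero.mpr hN : (N : K) ≠ 0)
  linear_combination 2 * hsum + this

theorem rootSum_one_two (hN : N ≠ 0) (hζ : IsPrimitiveRoot ζ N) :
    rootSum ζ N 1 2 = -((N : K) ^ 2 - 1) / 12 := by
  have hsum := sum_range_rootSum_succ hζ 2
  rw [← mul_right_inj' (two_ne_zero (α := K)), mul_sum, mul_zero,
    sum_congr rfl fun j hj => rootSum_succ_two hζ (mem_range.mp hj), sum_sub_distrib,
    sum_add_distrib, sum_const, card_range, nsmul_eq_mul, ← sum_mul, ← mul_sum,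
    rootSum_one_one hN hζ] at hsum
  have h1 := Finset.sum_range_natCast_mul_two (R := K) N
  have h2 := Finset.sum_range_natCast_mul_sub_one_mul_three (R := K) N
  field_simp
  apply mul_left_cancel₀ (Nat.cast_ne_zero.mpr hN : (N : K) ≠ 0)
  linear_combination 6 * hsum - 3 * (N - 1 : K) * h1 + 2 * h2

theorem rootSum_succ_two_eq (hζ : IsPrimitiveRoot ζ N) {j : ℕ} (hj : j < N) :
    rootSum ζ N (j + 1) 2 = -((N : K) ^ 2 - 1) / 12 + j * (N - j) / 2 := by
  have h := rootSum_succ_two hζ hj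
  rw [rootSum_one_one (by omega) hζ, rootSum_one_two (by omega) hζ] at h
  linear_combination h / 2

end CharZero

end

theorem stmt_7_general (N : ℕ) (m : ℤ) (hm1 : 1 ≤ m) (hm2 : m ≤ N) :
    ∑ α ∈ Finset.Icc 1 (N - 1), (η N α) ^ m / (η N α - 1) ^ 2 =
      -((N : ℂ) ^ 2 - 1) / 12 + ((m : ℂ) - 1) * ((N : ℂ) - (m : ℂ) + 1) / 2 := by
  obtain ⟨j, rfl⟩ : ∃ j : ℕ, m = (j + 1 : ℕ) := ⟨(m - 1).toNat, by omega⟩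
  have hζ := Complex.isPrimitiveRoot_exp N (by omega)
  have hη (α : ℕ) : η N α = exp (2 * Real.pi * I / N) ^ α := by
    rw [η, ← Complex.exp_nat_mul]
    ring_nf
  simp_rw [hη, zpow_natCast]
  rw [← rootSum, rootSum_succ_two_eq hζ (by omega)]
  push_cast
  ring

theorem stmt_7 (N : ℕ) (hN : 2 ≤ N) (m : ℤ) (hm1 : 1 ≤ m) (hm2 : m ≤ N) :
    ∑ α ∈ Finset.Icc 1 (N - 1), (η N α) ^ m / (η N α - 1) ^ 2 =
      -((N : ℂ) ^ 2 - 1) / 12 + ((m : ℂ) - 1) * ((N : ℂ) - (m : ℂ) + 1) / 2 :=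
  stmt_7_general N m hm1 hm2
end

section
/- Let N ≥ 2 and η_α = exp(2πiα/N) for α = 1,…,N-1. For every integer m with 0 ≤ m ≤ N, one has ∑_{α=1}^{N-1} η_α^m/|η_α - 1|² = (N²-1)/12 - m(N-m)/2, where |z|² = z·z̄. -/
open Finset Complex

/-!
Put `f k = ∑ α, η_α ^ k / |η_α - 1|²`. On the unit circle `(z - 1)² / |z - 1|² = -z`, so the
second difference `f (k + 2) - 2 f (k + 1) + f k = -∑ α, η_α ^ (k + 1)` equals `1` for
`k + 2 ≤ N`, as does that of the quadratic `q k = (N² - 1) / 12 - k (N - k) / 2`. Thus `f - q` is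
affine on `[0, N]`; it takes the same value at `0` and `N` because `η_α ^ N = 1`, so it is
constant, and the constant is `0` since both `f` and `q` sum to zero over `k < N`.
-/

section SecondDifference

variable {K : Type*}

theorem eq_add_mul_of_second_diff_eq_zero [CommRing K] {d : ℕ → K} {n : ℕ}
    (hd : ∀ k, k + 2 ≤ n → d (k + 2) - 2 * d (k + 1) + d k = 0) :
    ∀ k ≤ n, d k = d 0 + k * (d 1 - d 0)
  | 0, _ => by simp
  | 1, _ => by simp
  | k + 2, hk => by
    have h₀ := eq_add_mul_of_second_diff_eq_zero hd k (by omega)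
    have h₁ := eq_add_mul_of_second_diff_eq_zero hd (k + 1) (by omega)
    push_cast at h₁ ⊢
    linear_combination hd k hk + 2 * h₁ - h₀

theorem eq_zero_of_second_diff_eq_zero [Field K] [CharZero K] {d : ℕ → K} {n : ℕ} (hn : n ≠ 0)
    (hd : ∀ k, k + 2 ≤ n → d (k + 2) - 2 * d (k + 1) + d k = 0)
    (hper : d n = d 0) (hsum : ∑ k ∈ range n, d k = 0) :
    ∀ k ≤ n, d k = 0 := by
  have affine := eq_add_mul_of_second_diff_eq_zero hd
  have hslope : d 1 - d 0 = 0 := by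
    have := affine n le_rfl
    rw [hper, left_eq_add, mul_eq_zero] at this
    exact this.resolve_left (Nat.cast_ne_zero.mpr hn)
  have hconst : ∀ k ≤ n, d k = d 0 := fun k hk => by simpa [hslope] using affine k hk
  have h₀ : (n : K) * d 0 = 0 := by
    rw [← hsum, sum_congr rfl fun k hk => hconst k (mem_range.mp hk).le, sum_const, card_range,
      nsmul_eq_mul]
  intro k hk
  rw [hconst k hk]
  exact (mul_eq_zero.mp h₀).resolve_left (Nat.cast_ne_zero.mpr hn)

end SecondDifference

theorem Complex.sq_sub_one_div_normSq_sub_one {z : ℂ} (hz : ‖z‖ = 1) (hz₁ : z ≠ 1) :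
    (z - 1) ^ 2 / normSq (z - 1) = -z := by
  have hz₀ : z ≠ 0 := norm_ne_zero_iff.mp (by rw [hz]; exact one_ne_zero)
  have hsub : z - 1 ≠ 0 := sub_ne_zero.mpr hz₁
  rw [← mul_conj, map_sub, map_one, ← inv_eq_conj hz]
  field_simp
  ring

theorem IsPrimitiveRoot.geom_sum_pow_eq_zero {K : Type*} [Field K] {ζ : K} {N j : ℕ}
    (hζ : IsPrimitiveRoot ζ N) (hj : ¬ N ∣ j) : ∑ α ∈ range N, (ζ ^ j) ^ α = 0 := by
  rw [geom_sum_eq (mt (hζ.pow_eq_one_iff_dvd j).mp hj), pow_right_comm, hζ.pow_eq_one, one_pow,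
    sub_self, zero_div]

noncomputable def weightedPowerSum (ζ : ℂ) (N k : ℕ) : ℂ :=
  ∑ α ∈ Icc 1 (N - 1), (ζ ^ α) ^ k / normSq (ζ ^ α - 1)

noncomputable def quadraticValue (N k : ℕ) : ℂ := ((N : ℂ) ^ 2 - 1) / 12 - k * (N - k) / 2

theorem quadraticValue_second_diff (N k : ℕ) :
    quadraticValue N (k + 2) - 2 * quadraticValue N (k + 1) + quadraticValue N k = 1 := by
  simp only [quadraticValue]; push_cast; ring

theorem quadraticValue_self (N : ℕ) : quadraticValue N N = quadraticValue N 0 := by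
  simp only [quadraticValue]; push_cast; ring

theorem sum_range_quadraticValue (N : ℕ) : ∑ k ∈ range N, quadraticValue N k = 0 := by
  have closed : ∀ n, ∑ k ∈ range n, quadraticValue N k
      = n * ((N ^ 2 - 1) - (n - 1) * (3 * N - 2 * n + 1)) / 12 := by
    intro n
    induction n with
    | zero => simp
    | succ n ih => rw [sum_range_succ, ih, quadraticValue]; push_cast; ring
  rw [closed]; ring

section

variable {ζ : ℂ} {N : ℕ}

theorem weightedPowerSum_second_diff (hζ : IsPrimitiveRoot ζ N) {k : ℕ} (hk : k + 2 ≤ N) :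
    weightedPowerSum ζ N (k + 2) - 2 * weightedPowerSum ζ N (k + 1) + weightedPowerSum ζ N k
      = 1 := by
  have hN : N ≠ 0 := by omega
  have hterm : ∀ α ∈ Icc 1 (N - 1),
      (ζ ^ α) ^ (k + 2) / normSq (ζ ^ α - 1) - 2 * ((ζ ^ α) ^ (k + 1) / normSq (ζ ^ α - 1))
        + (ζ ^ α) ^ k / normSq (ζ ^ α - 1) = -(ζ ^ (k + 1)) ^ α := by
    intro α hα
    rw [mem_Icc] at hα
    have hne : ζ ^ α ≠ 1 := hζ.pow_ne_one_of_pos_of_lt (by omega) (by omega)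
    have hnorm : ‖ζ ^ α‖ = 1 := by rw [norm_pow, hζ.norm'_eq_one hN, one_pow]
    calc _ = (ζ ^ α) ^ k * ((ζ ^ α - 1) ^ 2 / normSq (ζ ^ α - 1)) := by ring
      _ = -(ζ ^ (k + 1)) ^ α := by
        rw [Complex.sq_sub_one_div_normSq_sub_one hnorm hne]; ring
  have hIcc : Icc 1 (N - 1) = Ico 1 N := by ext; simp; omega
  have hgeom :=
    hζ.geom_sum_pow_eq_zero (j := k + 1) (Nat.not_dvd_of_pos_of_lt (by omega) (by omega))
  rw [sum_range_eq_add_Ico _ (Nat.pos_of_ne_zero hN), pow_zero] at hgeom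
  simp only [weightedPowerSum, mul_sum, ← sum_sub_distrib, ← sum_add_distrib]
  rw [sum_congr rfl hterm, sum_neg_distrib, hIcc]
  linear_combination -hgeom

theorem weightedPowerSum_self (hζ : IsPrimitiveRoot ζ N) :
    weightedPowerSum ζ N N = weightedPowerSum ζ N 0 := by
  simp only [weightedPowerSum, pow_right_comm _ _ N, hζ.pow_eq_one, one_pow, pow_zero]

theorem sum_range_weightedPowerSum (hζ : IsPrimitiveRoot ζ N) :
    ∑ k ∈ range N, weightedPowerSum ζ N k = 0 := by
  simp only [weightedPowerSum]
  rw [sum_comm]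
  refine sum_eq_zero fun α hα => ?_
  rw [mem_Icc] at hα
  rw [← sum_div, hζ.geom_sum_pow_eq_zero (Nat.not_dvd_of_pos_of_lt (by omega) (by omega)),
    zero_div]

theorem weightedPowerSum_eq_quadraticValue (hζ : IsPrimitiveRoot ζ N)
    (hN : N ≠ 0) {k : ℕ} (hk : k ≤ N) : weightedPowerSum ζ N k = quadraticValue N k := by
  rw [← sub_eq_zero]
  refine eq_zero_of_second_diff_eq_zero (d := fun k => weightedPowerSum ζ N k - quadraticValue N k)
    hN (fun k hk => ?_) ?_ ?_ k hk
  · linear_combination weightedPowerSum_second_diff hζ hk - quadraticValue_second_diff N k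
  · simp only [weightedPowerSum_self hζ, quadraticValue_self]
  · rw [sum_sub_distrib, sum_range_weightedPowerSum hζ, sum_range_quadraticValue, sub_zero]

end

theorem stmt_9 (N : ℕ) (hN : 2 ≤ N) (m : ℤ) (hm1 : 0 ≤ m) (hm2 : m ≤ N) :
    ∑ α ∈ Finset.Icc 1 (N - 1), (η N α) ^ m / (Complex.normSq (η N α - 1) : ℂ) =
      ((N : ℂ) ^ 2 - 1) / 12 - (m : ℂ) * ((N : ℂ) - (m : ℂ)) / 2 := by
  have hN₀ : N ≠ 0 := by omega
  have hη : ∀ α, η N α = exp (2 * Real.pi * I / N) ^ α := fun α => by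
    rw [η, ← exp_nat_mul]; ring_nf
  lift m to ℕ using hm1
  simp only [hη, zpow_natCast, Int.cast_natCast]
  exact weightedPowerSum_eq_quadraticValue (isPrimitiveRoot_exp N hN₀) hN₀ (by omega)
end

section
/- Let N ≥ 2 and η_α = exp(2πiα/N) for α = 1,…,N-1. Then the double sum over pairs of distinct indices ∑_{α≠β, 1≤α,β≤N-1} 1/((η_α - 1)(η_β - 1)) = (N-1)(N-2)/3. -/
/-!
For an `N`-th root of unity `x ≠ 1`, differentiating the geometric series gives
`N / (x - 1) = ∑_{k < N} k x^k`. Substituting this for one factor and using the orthogonality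
relation `∑_{α=1}^{N-1} ω^{αk} = -1` (`0 < k < N`) evaluates
`S₁ = ∑_α 1 / (ω^α - 1) = -(N-1)/2` and `S₂ = ∑_α 1 / (ω^α - 1)² = -(N-1)(N-5)/12`;
the sum over distinct pairs is `S₁² - S₂`.
-/

open Finset Complex

section Sums

variable {R : Type*} [CommRing R]

lemma two_mul_sum_range_cast (n : ℕ) : 2 * ∑ i ∈ range n, (i : R) = n * (n - 1) := by
  induction n with
  | zero => simp
  | succ n ih => rw [sum_range_succ, mul_add, ih]; push_cast; ring

lemma six_mul_sum_range_cast_sq (n : ℕ) :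
    6 * ∑ i ∈ range n, (i : R) ^ 2 = n * (n - 1) * (2 * n - 1) := by
  induction n with
  | zero => simp
  | succ n ih => rw [sum_range_succ, mul_add, ih]; push_cast; ring

lemma sum_range_cast_mul_pow_mul_sub_one (x : R) (n : ℕ) :
    (∑ k ∈ range n, (k : R) * x ^ k) * (x - 1) =
      (n - 1) * x ^ n - ∑ k ∈ range n, x ^ k + 1 := by
  induction n with
  | zero => simp
  | succ n ih => rw [sum_range_succ, sum_range_succ, add_mul, ih]; push_cast; ring

lemma sum_sum_erase_mul {ι : Type*} [DecidableEq ι] (s : Finset ι) (f : ι → R) :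
    ∑ a ∈ s, ∑ b ∈ s.erase a, f a * f b =
      (∑ a ∈ s, f a) ^ 2 - ∑ a ∈ s, f a ^ 2 := by
  rw [sq, sum_mul, ← sum_sub_distrib]
  refine sum_congr rfl fun a ha => ?_
  rw [← mul_sum, sum_erase_eq_sub ha, mul_comm, sub_mul, sq, mul_comm]

lemma sum_range_eq_add_sum_Icc_one_pred {M : Type*} [AddCommMonoid M] {n : ℕ} (hn : n ≠ 0)
    (f : ℕ → M) : ∑ i ∈ range n, f i = f 0 + ∑ i ∈ Icc 1 (n - 1), f i := by
  have : range n = insert 0 (Icc 1 (n - 1)) := by ext; simp; omega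
  rw [this, sum_insert (by simp)]

end Sums

section RootsOfUnity

variable {K : Type*} [Field K] {N : ℕ}

lemma sum_Icc_one_pred_pow_eq_neg_one (hN : N ≠ 0) {x : K} (hx : x ≠ 1) (hxN : x ^ N = 1) :
    ∑ α ∈ Icc 1 (N - 1), x ^ α = -1 := by
  have hgeom : ∑ α ∈ range N, x ^ α = 0 := by rw [geom_sum_eq hx, hxN, sub_self, zero_div]
  rw [sum_range_eq_add_sum_Icc_one_pred hN, pow_zero] at hgeom
  linear_combination hgeom

lemma sum_range_cast_mul_pow_of_pow_eq_one {x : K} (hx : x ≠ 1) (hxN : x ^ N = 1) :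
    ∑ k ∈ range N, (k : K) * x ^ k = N * (x - 1)⁻¹ := by
  have key := sum_range_cast_mul_pow_mul_sub_one x N
  rw [geom_sum_eq hx, hxN, sub_self, zero_div, mul_one] at key
  rw [eq_mul_inv_iff_mul_eq₀ (sub_ne_zero.mpr hx), key]
  ring

lemma pow_mul_inv_sub_one {y : K} (hy : y ≠ 1) (k : ℕ) :
    y ^ k * (y - 1)⁻¹ = (y - 1)⁻¹ + ∑ j ∈ range k, y ^ j := by
  have hy' : y - 1 ≠ 0 := sub_ne_zero.mpr hy
  have := geom_sum_mul y k
  field_simp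
  linear_combination -this

namespace IsPrimitiveRoot

variable {ω : K}

lemma pow_ne_one_of_mem_Icc_s10 (hω : IsPrimitiveRoot ω N) {α : ℕ} (hα : α ∈ Icc 1 (N - 1)) :
    ω ^ α ≠ 1 := by
  rw [mem_Icc] at hα
  exact hω.pow_ne_one_of_pos_of_lt (by omega) (by omega)

lemma sum_Icc_pow_pow_eq_neg_one (hω : IsPrimitiveRoot ω N) {k : ℕ} (hk0 : k ≠ 0)
    (hkN : k < N) :
    ∑ α ∈ Icc 1 (N - 1), (ω ^ α) ^ k = -1 := by
  simp_rw [pow_right_comm ω _ k]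
  exact sum_Icc_one_pred_pow_eq_neg_one (by omega) (hω.pow_ne_one_of_pos_of_lt hk0 hkN)
    (by rw [pow_right_comm, hω.pow_eq_one, one_pow])

lemma cast_mul_sum_Icc_pow_pow (hω : IsPrimitiveRoot ω N) {k : ℕ} (hkN : k < N) :
    (k : K) * ∑ α ∈ Icc 1 (N - 1), (ω ^ α) ^ k = -k := by
  rcases eq_or_ne k 0 with rfl | hk0
  · simp
  · rw [hω.sum_Icc_pow_pow_eq_neg_one hk0 hkN, mul_neg_one]

lemma sum_range_cast_mul_pow_pow (hω : IsPrimitiveRoot ω N) {α : ℕ}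
    (hα : α ∈ Icc 1 (N - 1)) :
    ∑ k ∈ range N, (k : K) * (ω ^ α) ^ k = N * (ω ^ α - 1)⁻¹ :=
  sum_range_cast_mul_pow_of_pow_eq_one (hω.pow_ne_one_of_mem_Icc_s10 hα)
    (by rw [pow_right_comm, hω.pow_eq_one, one_pow])

lemma sum_Icc_pow_mul_inv_pow_sub_one (hω : IsPrimitiveRoot ω N) {k : ℕ} (hk0 : k ≠ 0)
    (hkN : k ≤ N) :
    ∑ α ∈ Icc 1 (N - 1), (ω ^ α) ^ k * (ω ^ α - 1)⁻¹ =
      ∑ α ∈ Icc 1 (N - 1), (ω ^ α - 1)⁻¹ + N - k := by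
  obtain ⟨m, rfl⟩ := Nat.exists_eq_succ_of_ne_zero hk0
  have hN : 1 ≤ N := by omega
  rw [sum_congr rfl fun α hα => pow_mul_inv_sub_one (hω.pow_ne_one_of_mem_Icc_s10 hα) _,
    sum_add_distrib, sum_comm]
  simp_rw [sum_range_succ', pow_zero]
  rw [sum_congr rfl fun j hj => hω.sum_Icc_pow_pow_eq_neg_one j.succ_ne_zero
    (by rw [mem_range] at hj; omega)]
  simp only [sum_neg_distrib, sum_const, card_range, Nat.card_Icc, nsmul_eq_mul, mul_one]
  push_cast [Nat.sub_add_cancel hN, Nat.cast_sub hN]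
  ring

variable [CharZero K]

lemma sum_Icc_inv_pow_sub_one (hω : IsPrimitiveRoot ω N) (hN : N ≠ 0) :
    ∑ α ∈ Icc 1 (N - 1), (ω ^ α - 1)⁻¹ = -((N : K) - 1) / 2 := by
  have hN' : (N : K) ≠ 0 := Nat.cast_ne_zero.mpr hN
  have key :
      (N : K) * ∑ α ∈ Icc 1 (N - 1), (ω ^ α - 1)⁻¹ = -∑ k ∈ range N, (k : K) := by
    calc (N : K) * ∑ α ∈ Icc 1 (N - 1), (ω ^ α - 1)⁻¹
        = ∑ α ∈ Icc 1 (N - 1), ∑ k ∈ range N, (k : K) * (ω ^ α) ^ k := by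
          rw [mul_sum]; exact sum_congr rfl fun α hα => (hω.sum_range_cast_mul_pow_pow hα).symm
      _ = ∑ k ∈ range N, (k : K) * ∑ α ∈ Icc 1 (N - 1), (ω ^ α) ^ k := by
          rw [sum_comm]; simp_rw [mul_sum]
      _ = -∑ k ∈ range N, (k : K) := by
          rw [← sum_neg_distrib]
          exact sum_congr rfl fun k hk => hω.cast_mul_sum_Icc_pow_pow (mem_range.mp hk)
  have := two_mul_sum_range_cast (R := K) N
  apply mul_left_cancel₀ hN'
  linear_combination key - this / 2

lemma sum_Icc_inv_pow_sub_one_sq (hω : IsPrimitiveRoot ω N) (hN : N ≠ 0) :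
    ∑ α ∈ Icc 1 (N - 1), ((ω ^ α - 1)⁻¹) ^ 2 = -((N : K) - 1) * (N - 5) / 12 := by
  have hN' : (N : K) ≠ 0 := Nat.cast_ne_zero.mpr hN
  have key : (N : K) * ∑ α ∈ Icc 1 (N - 1), ((ω ^ α - 1)⁻¹) ^ 2 =
      ∑ k ∈ range N, (k : K) * (((N : K) + 1) / 2 - k) := by
    calc (N : K) * ∑ α ∈ Icc 1 (N - 1), ((ω ^ α - 1)⁻¹) ^ 2
        = ∑ α ∈ Icc 1 (N - 1), ∑ k ∈ range N,
            (k : K) * ((ω ^ α) ^ k * (ω ^ α - 1)⁻¹) := by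
          rw [mul_sum]
          refine sum_congr rfl fun α hα => ?_
          rw [sq, ← mul_assoc, ← hω.sum_range_cast_mul_pow_pow hα, sum_mul]
          exact sum_congr rfl fun k _ => by ring
      _ = ∑ k ∈ range N,
            (k : K) * ∑ α ∈ Icc 1 (N - 1), (ω ^ α) ^ k * (ω ^ α - 1)⁻¹ := by
          rw [sum_comm]; simp_rw [mul_sum]
      _ = ∑ k ∈ range N, (k : K) * (((N : K) + 1) / 2 - k) := by
          refine sum_congr rfl fun k hk => ?_
          rcases eq_or_ne k 0 with rfl | hk0
          · simp
          · rw [hω.sum_Icc_pow_mul_inv_pow_sub_one hk0 (mem_range.mp hk).le,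
              hω.sum_Icc_inv_pow_sub_one hN]
            ring
  have h1 := two_mul_sum_range_cast (R := K) N
  have h2 := six_mul_sum_range_cast_sq (R := K) N
  simp_rw [mul_sub, sum_sub_distrib, ← sum_mul, ← sq] at key
  apply mul_left_cancel₀ hN'
  linear_combination key + (N + 1) / 4 * h1 - h2 / 6

end IsPrimitiveRoot

end RootsOfUnity

lemma η_eq_pow (N α : ℕ) : η N α = exp (2 * Real.pi * I / N) ^ α := by
  rw [η, ← exp_nat_mul]
  ring_nf

theorem stmt_10 (N : ℕ) (hN : 2 ≤ N) :
    ∑ α ∈ Finset.Icc 1 (N - 1), ∑ β ∈ (Finset.Icc 1 (N - 1)).erase α,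
        1 / ((η N α - 1) * (η N β - 1)) =
      ((N : ℂ) - 1) * ((N : ℂ) - 2) / 3 := by
  have hN0 : N ≠ 0 := by omega
  have hω := isPrimitiveRoot_exp N hN0
  simp_rw [η_eq_pow, one_div, mul_inv]
  rw [sum_sum_erase_mul, hω.sum_Icc_inv_pow_sub_one hN0, hω.sum_Icc_inv_pow_sub_one_sq hN0]
  ring
end
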